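/- arXiv:0801.0199 — 7 statements merged into one kernel-verified Lean document; each statement's English description precedes it below -/
import Mathlib

section
/- Let V be a commutative unital quantale, (X,a) a V-category, and ψ : X → V a V-module from X to E, i.e. a(x,y) ⊗ ψ(y) ≤ ψ(x) for all x,y ∈ X. Then ψ is right adjoint — i.e. there exists φ : X → V with φ(y) ⊗ a(y,x) ≤ φ(x) for all x,y, such that ψ(x) ⊗ φ(y) ≤ a(x,y) for all x,y and k ≤ ⋁_{x∈X} φ(x) ⊗ ψ(x) — if and only if k ≤ ⋁_{y∈X} ψ(y) ⊗ ⋀_{x∈X} (ψ(x) ⊸ a(x,y)). -/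
/-!
The candidate left adjoint is `φ₀ y = ⋀ₓ (ψ x ⊸ a x y)`: it is the largest `φ` with
`ψ x ⊗ φ y ≤ a x y`, and it is a module by transitivity of `a`. Hence `ψ` is right adjoint iff
`φ₀` satisfies the counit inequality `k ≤ ⋁ φ₀ ⊗ ψ`, since any left adjoint lies below `φ₀`.
-/

def qhom {V : Type*} [CommMonoid V] [CompleteLattice V] [IsQuantale V] (u v : V) : V :=
  sSup {z | z * u ≤ v}

section

variable {V : Type*} [CommMonoid V] [CompleteLattice V] [IsQuantale V]

theorem le_qhom_iff {u v z : V} : z ≤ qhom u v ↔ z * u ≤ v :=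
  Quantale.leftMulResiduation_le_iff_mul_le

variable {X : Type*} (a : X → X → V) (ψ : X → V)

def residualModule (y : X) : V :=
  ⨅ x, qhom (ψ x) (a x y)

variable {a ψ}

theorem le_residualModule_iff {φ : V} {y : X} :
    φ ≤ residualModule a ψ y ↔ ∀ x, ψ x * φ ≤ a x y := by
  simp only [residualModule, le_iInf_iff, le_qhom_iff, mul_comm φ]

theorem mul_residualModule_le (x y : X) : ψ x * residualModule a ψ y ≤ a x y :=
  le_residualModule_iff.mp le_rfl x

theorem residualModule_mul_le (ha : ∀ x y z, a x y * a y z ≤ a x z) (x y : X) :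
    residualModule a ψ y * a y x ≤ residualModule a ψ x :=
  le_residualModule_iff.mpr fun x' =>
    calc ψ x' * (residualModule a ψ y * a y x)
        = ψ x' * residualModule a ψ y * a y x := (mul_assoc _ _ _).symm
      _ ≤ a x' y * a y x := mul_le_mul_left (mul_residualModule_le x' y) _
      _ ≤ a x' x := ha x' y x

end

theorem stmt6_general {V : Type*} [CommMonoid V] [CompleteLattice V] [IsQuantale V]
    {X : Type*}
    (a : X → X → V)
    (ha2 : ∀ x y z, a x y * a y z ≤ a x z)
    (ψ : X → V) :
    (∃ φ : X → V, (∀ x y, φ y * a y x ≤ φ x) ∧ (∀ x y, ψ x * φ y ≤ a x y) ∧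
        (1 : V) ≤ ⨆ x : X, φ x * ψ x) ↔
      (1 : V) ≤ ⨆ y : X, ψ y * ⨅ x : X, qhom (ψ x) (a x y) := by
  change _ ↔ (1 : V) ≤ ⨆ y, ψ y * residualModule a ψ y
  constructor
  · rintro ⟨φ, -, hφψ, hunit⟩
    have hφ_le : ∀ y, φ y ≤ residualModule a ψ y := fun y =>
      le_residualModule_iff.mpr fun x => hφψ x y
    exact hunit.trans <| iSup_mono fun y => by
      rw [mul_comm]; exact mul_le_mul_right (hφ_le y) _
  · intro hunit
    refine ⟨residualModule a ψ, residualModule_mul_le ha2, mul_residualModule_le, ?_⟩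
    simpa only [mul_comm] using hunit

/-- a V-module `ψ : X ⇸ E` is right adjoint iff it is tight, i.e. iff
`k ≤ ⋁_y ψ y ⊗ ⋀_x (ψ x ⊸ a x y)`. -/
theorem stmt6 {V : Type*} [CommMonoid V] [CompleteLattice V] [IsQuantale V]
    {X : Type*}
    (a : X → X → V) (ha1 : ∀ x, (1 : V) ≤ a x x)
    (ha2 : ∀ x y z, a x y * a y z ≤ a x z)
    (ψ : X → V) (hψ : ∀ x y, a x y * ψ y ≤ ψ x) :
    (∃ φ : X → V, (∀ x y, φ y * a y x ≤ φ x) ∧ (∀ x y, ψ x * φ y ≤ a x y) ∧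
        (1 : V) ≤ ⨆ x : X, φ x * ψ x) ↔
      (1 : V) ≤ ⨆ y : X, ψ y * ⨅ x : X, qhom (ψ x) (a x y) :=
  stmt6_general a ha2 ψ
end

section
/- Let V be a commutative unital quantale, let f : (X,a) → (Y,b) be a fully faithful V-functor (a(x,x') = b(f(x),f(x')) for all x,x'), and let φ : X → V be a V-functor into (V,⊸) (i.e. φ(x) ⊗ a(x,x') ≤ φ(x') for all x,x'). Then the map ψ : Y → V defined by ψ(y) = ⋁_{x∈X} φ(x) ⊗ b(f(x),y) is a V-functor (Y,b) → (V,⊸) satisfying ψ(f(x)) = φ(x) for all x ∈ X. In particular, the V-category (V,⊸) is injective with respect to fully faithful V-functors. -/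
/-! `ψ` is a V-functor because `⊗` distributes over suprema and `b` is transitive. On the image
of `f`, full faithfulness turns the functoriality of `φ` into `φ x ⊗ b (f x) (f x₀) ≤ φ x₀`, and
the summand `x = x₀` gives the reverse inequality by reflexivity of `b`. -/

section

variable {V : Type*} [CommMonoid V] [CompleteLattice V] [IsQuantale V] {X Y : Type*}

/-- The left Kan extension of `φ` along `f`. -/
def extendAlong (b : Y → Y → V) (f : X → Y) (φ : X → V) (y : Y) : V :=
  ⨆ x, φ x * b (f x) y

lemma extendAlong_mul_le {b : Y → Y → V} (hb : ∀ x y z, b x y * b y z ≤ b x z)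
    (f : X → Y) (φ : X → V) (y y' : Y) :
    extendAlong b f φ y * b y y' ≤ extendAlong b f φ y' := by
  rw [extendAlong, Quantale.iSup_mul_distrib]
  refine iSup_le fun x => le_iSup_of_le x ?_
  rw [mul_assoc]
  exact mul_le_mul_right (hb _ _ _) _

lemma extendAlong_apply_self {b : Y → Y → V} (hb : ∀ y, (1 : V) ≤ b y y) {f : X → Y}
    {φ : X → V} (hφ : ∀ x x', φ x * b (f x) (f x') ≤ φ x') (x₀ : X) :
    extendAlong b f φ (f x₀) = φ x₀ := by
  refine le_antisymm (iSup_le fun x => hφ x x₀) ?_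
  calc φ x₀ = φ x₀ * 1 := (mul_one _).symm
    _ ≤ φ x₀ * b (f x₀) (f x₀) := mul_le_mul_right (hb _) _
    _ ≤ extendAlong b f φ (f x₀) := le_iSup (fun x => φ x * b (f x) (f x₀)) x₀

end

theorem stmt7_general {V : Type*} [CommMonoid V] [CompleteLattice V] [IsQuantale V]
    {X Y : Type*}
    (a : X → X → V)
    (b : Y → Y → V) (hb1 : ∀ y, (1 : V) ≤ b y y)
    (hb2 : ∀ x y z, b x y * b y z ≤ b x z)
    (f : X → Y) (hff : ∀ x x', a x x' = b (f x) (f x'))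
    (φ : X → V) (hφ : ∀ x x', φ x * a x x' ≤ φ x') :
    ((∀ y y', (⨆ x : X, φ x * b (f x) y) * b y y' ≤ ⨆ x : X, φ x * b (f x) y') ∧
      (∀ x₀ : X, (⨆ x : X, φ x * b (f x) (f x₀)) = φ x₀)) ∧
    (∀ φ' : X → V, (∀ x x', φ' x * a x x' ≤ φ' x') →
      ∃ ψ' : Y → V, (∀ y y', ψ' y * b y y' ≤ ψ' y') ∧ ∀ x, ψ' (f x) = φ' x) := by
  have transport : ∀ φ' : X → V, (∀ x x', φ' x * a x x' ≤ φ' x') →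
      ∀ x x', φ' x * b (f x) (f x') ≤ φ' x' := fun φ' h x x' => hff x x' ▸ h x x'
  exact ⟨⟨extendAlong_mul_le hb2 f φ, extendAlong_apply_self hb1 (transport φ hφ)⟩,
    fun φ' hφ' => ⟨extendAlong b f φ', extendAlong_mul_le hb2 f φ',
      extendAlong_apply_self hb1 (transport φ' hφ')⟩⟩

/-- if `f : (X,a) → (Y,b)` is fully faithful and `φ : X → V` is a V-functor
into `(V,⊸)`, then `ψ(y) = ⋁_x φ x ⊗ b (f x) y` is a V-functor `(Y,b) → (V,⊸)` with
`ψ ∘ f = φ`; in particular `(V,⊸)` is injective w.r.t. fully faithful V-functors. -/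
theorem stmt7 {V : Type*} [CommMonoid V] [CompleteLattice V] [IsQuantale V]
    {X Y : Type*}
    (a : X → X → V) (ha1 : ∀ x, (1 : V) ≤ a x x)
    (ha2 : ∀ x y z, a x y * a y z ≤ a x z)
    (b : Y → Y → V) (hb1 : ∀ y, (1 : V) ≤ b y y)
    (hb2 : ∀ x y z, b x y * b y z ≤ b x z)
    (f : X → Y) (hff : ∀ x x', a x x' = b (f x) (f x'))
    (φ : X → V) (hφ : ∀ x x', φ x * a x x' ≤ φ x') :
    ((∀ y y', (⨆ x : X, φ x * b (f x) y) * b y y' ≤ ⨆ x : X, φ x * b (f x) y') ∧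
      (∀ x₀ : X, (⨆ x : X, φ x * b (f x) (f x₀)) = φ x₀)) ∧
    (∀ φ' : X → V, (∀ x x', φ' x * a x x' ≤ φ' x') →
      ∃ ψ' : Y → V, (∀ y y', ψ' y * b y y' ≤ ψ' y') ∧ ∀ x, ψ' (f x) = φ' x) :=
  stmt7_general a b hb1 hb2 f hff φ hφ
end

section
/- Let V be a commutative unital quantale and let f : (X,a) → (Y,b) and g : (Y,b) → (Z,c) be V-functors. Then: (1) if f and g are L-dense, so is g∘f; (2) if g∘f is L-dense, so is g; (3) if g∘f is L-dense and g is fully faithful, then f is L-dense; (4) if g∘f is fully faithful and f is L-dense, then g is fully faithful. -/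
/-!
All four statements reduce to two observations. By transitivity the inequality
`⨆ x, b y (f x) * b (f x) y' ≤ b y y'` always holds, so L-density is only the reverse
inequality. And for an L-dense `f` the unit `1 ≤ b y y` factors as
`1 ≤ ⨆ x, b y (f x) * b (f x) y`; inserting this unit into a product and distributing it over
the supremum routes any composite through the image of `f`.
-/

open Quantale

/-- A V-functor `f : (X,a) → (Y,b)` is L-dense if
`b y y' = ⋁_x b y (f x) ⊗ b (f x) y'` for all `y, y'`. -/
def LDense {V : Type*} [CommMonoid V] [CompleteLattice V] [IsQuantale V]
    {X Y : Type*} (b : Y → Y → V) (f : X → Y) : Prop :=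
  ∀ y y', b y y' = ⨆ x : X, b y (f x) * b (f x) y'

/-- A V-functor `f : (X,a) → (Y,b)` is fully faithful if `a x x' = b (f x) (f x')`. -/
def FullyFaithful {V : Type*} {X Y : Type*}
    (a : X → X → V) (b : Y → Y → V) (f : X → Y) : Prop :=
  ∀ x x', a x x' = b (f x) (f x')

section

variable {V : Type*} [CommMonoid V] [CompleteLattice V] [IsQuantale V] {ι κ : Type*}

lemma mul_le_iSup_mul_mul_of_one_le {s : ι → V} (hs : 1 ≤ ⨆ i, s i) (u v : V) :
    u * v ≤ ⨆ i, u * s i * v :=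
  calc u * v = u * 1 * v := by rw [mul_one]
    _ ≤ u * (⨆ i, s i) * v := by gcongr
    _ = ⨆ i, u * s i * v := by rw [mul_iSup_distrib, iSup_mul_distrib]

lemma le_iSup_iSup_mul_mul_of_one_le {s : ι → V} {t : κ → V} (hs : 1 ≤ ⨆ i, s i)
    (ht : 1 ≤ ⨆ j, t j) (v : V) : v ≤ ⨆ i, ⨆ j, s i * v * t j :=
  calc v = 1 * v * 1 := by rw [one_mul, mul_one]
    _ ≤ (⨆ i, s i) * v * (⨆ j, t j) := by gcongr
    _ = ⨆ i, ⨆ j, s i * v * t j := by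
      rw [iSup_mul_distrib, iSup_mul_distrib]
      simp only [mul_iSup_distrib]

variable {X Y Z : Type*} {a : X → X → V} {b : Y → Y → V} {c : Z → Z → V}
  {f : X → Y} {g : Y → Z}

lemma LDense.of_le (hb : ∀ x y z, b x y * b y z ≤ b x z)
    (h : ∀ y y', b y y' ≤ ⨆ x, b y (f x) * b (f x) y') : LDense b f :=
  fun y y' => le_antisymm (h y y') (iSup_le fun _ => hb _ _ _)

lemma LDense.one_le_iSup (hf : LDense b f) (hb : ∀ y, 1 ≤ b y y) (y : Y) :
    1 ≤ ⨆ x, b y (f x) * b (f x) y :=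
  hf y y ▸ hb y

lemma LDense.comp (hb : ∀ y, 1 ≤ b y y) (hc : ∀ x y z, c x y * c y z ≤ c x z)
    (hgc : ∀ y y', b y y' ≤ c (g y) (g y')) (hf : LDense b f) (hg : LDense c g) :
    LDense c (g ∘ f) := by
  refine LDense.of_le hc fun z z' => ?_
  rw [hg z z']
  refine iSup_le fun y => (mul_le_iSup_mul_mul_of_one_le (hf.one_le_iSup hb y) _ _).trans <|
    iSup_mono fun x => ?_
  calc c z (g y) * (b y (f x) * b (f x) y) * c (g y) z'
      ≤ c z (g y) * (c (g y) (g (f x)) * c (g (f x)) (g y)) * c (g y) z' := by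
        gcongr <;> apply hgc
    _ = (c z (g y) * c (g y) (g (f x))) * (c (g (f x)) (g y) * c (g y) z') := by
        simp only [mul_assoc]
    _ ≤ c z (g (f x)) * c (g (f x)) z' := mul_le_mul' (hc _ _ _) (hc _ _ _)

lemma LDense.of_comp (hc : ∀ x y z, c x y * c y z ≤ c x z) (h : LDense c (g ∘ f)) :
    LDense c g :=
  LDense.of_le hc fun z z' => (h z z').trans_le <| iSup_le fun x => le_iSup_of_le (f x) le_rfl

lemma LDense.of_comp_of_fullyFaithful (h : LDense c (g ∘ f)) (hg : FullyFaithful b c g) :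
    LDense b f := fun y y' => by
  rw [hg, h]
  exact iSup_congr fun x => by rw [hg, hg]; rfl

lemma FullyFaithful.of_comp_of_lDense (hb1 : ∀ y, 1 ≤ b y y)
    (hb2 : ∀ x y z, b x y * b y z ≤ b x z) (hc : ∀ x y z, c x y * c y z ≤ c x z)
    (hfa : ∀ x x', a x x' ≤ b (f x) (f x')) (hgb : ∀ y y', b y y' ≤ c (g y) (g y'))
    (h : FullyFaithful a c (g ∘ f)) (hf : LDense b f) : FullyFaithful b c g := by
  intro y y'
  refine le_antisymm (hgb y y') ?_
  have through_f (x x' : X) : b (f x) y * c (g y) (g y') * b y' (f x') ≤ b (f x) (f x') :=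
    calc b (f x) y * c (g y) (g y') * b y' (f x')
        ≤ c (g (f x)) (g y) * c (g y) (g y') * c (g y') (g (f x')) := by
          gcongr <;> apply hgb
      _ ≤ c (g (f x)) (g (f x')) := (mul_le_mul' (hc _ _ _) le_rfl).trans (hc _ _ _)
      _ = a x x' := (h x x').symm
      _ ≤ b (f x) (f x') := hfa x x'
  -- both units `1 ≤ b y y` and `1 ≤ b y' y'` are factored through `f`
  refine (le_iSup_iSup_mul_mul_of_one_le (hf.one_le_iSup hb1 y) (hf.one_le_iSup hb1 y') _).trans ?_
  rw [hf y y']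
  refine iSup_le fun x => iSup_le fun x' => le_iSup_of_le x ?_
  calc b y (f x) * b (f x) y * c (g y) (g y') * (b y' (f x') * b (f x') y')
      = b y (f x) * (b (f x) y * c (g y) (g y') * b y' (f x')) * b (f x') y' := by
        simp only [mul_assoc]
    _ ≤ b y (f x) * b (f x) (f x') * b (f x') y' := by gcongr; exact through_f x x'
    _ ≤ b y (f x) * b (f x) y' := by
        rw [mul_assoc]
        exact mul_le_mul' le_rfl (hb2 _ _ _)

end

theorem stmt8_general {V : Type*} [CommMonoid V] [CompleteLattice V] [IsQuantale V]
    {X Y Z : Type*}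
    (a : X → X → V)
    (b : Y → Y → V) (hb1 : ∀ y, (1 : V) ≤ b y y)
    (hb2 : ∀ x y z, b x y * b y z ≤ b x z)
    (c : Z → Z → V)
    (hc2 : ∀ x y z, c x y * c y z ≤ c x z)
    (f : X → Y) (hf : ∀ x x', a x x' ≤ b (f x) (f x'))
    (g : Y → Z) (hg : ∀ y y', b y y' ≤ c (g y) (g y')) :
    (LDense b f → LDense c g → LDense c (g ∘ f)) ∧
    (LDense c (g ∘ f) → LDense c g) ∧
    (LDense c (g ∘ f) → FullyFaithful b c g → LDense b f) ∧
    (FullyFaithful a c (g ∘ f) → LDense b f → FullyFaithful b c g) :=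
  ⟨LDense.comp hb1 hc2 hg, LDense.of_comp hc2, LDense.of_comp_of_fullyFaithful,
    FullyFaithful.of_comp_of_lDense hb1 hb2 hc2 hf hg⟩

/-- composition-cancellation properties of L-dense and fully faithful
V-functors. -/
theorem stmt8 {V : Type*} [CommMonoid V] [CompleteLattice V] [IsQuantale V]
    {X Y Z : Type*}
    (a : X → X → V) (ha1 : ∀ x, (1 : V) ≤ a x x)
    (ha2 : ∀ x y z, a x y * a y z ≤ a x z)
    (b : Y → Y → V) (hb1 : ∀ y, (1 : V) ≤ b y y)
    (hb2 : ∀ x y z, b x y * b y z ≤ b x z)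
    (c : Z → Z → V) (hc1 : ∀ z, (1 : V) ≤ c z z)
    (hc2 : ∀ x y z, c x y * c y z ≤ c x z)
    (f : X → Y) (hf : ∀ x x', a x x' ≤ b (f x) (f x'))
    (g : Y → Z) (hg : ∀ y y', b y y' ≤ c (g y) (g y')) :
    (LDense b f → LDense c g → LDense c (g ∘ f)) ∧
    (LDense c (g ∘ f) → LDense c g) ∧
    (LDense c (g ∘ f) → FullyFaithful b c g → LDense b f) ∧
    (FullyFaithful a c (g ∘ f) → LDense b f → FullyFaithful b c g) :=
  stmt8_general a b hb1 hb2 c hc2 f hf g hg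
end

section
/- Let V be a commutative unital quantale and m : (M,d) → (X,a) a V-functor. Then m is L-dense if and only if for every V-category (Y,b) and all V-functors f,g : X → Y with f∘m = g∘m one has f ≅ g. -/
/-!
If `m` is L-dense, then `a x x ≥ 1` is a supremum of composites `a x (m p) * a (m p) x`, each of
which is pushed by `f` on the left and `g` on the right into `b (f x) (g (m p)) * b (g (m p)) (g x)`,
since `f` and `g` agree on `m p`; transitivity of `b` then gives `1 ≤ b (f x) (g x)`.

Conversely, test the condition with `Y = (X → V)` and the hom `⋀_z (φ z ⇨ ψ z)`, the Yoneda
embedding `x ↦ a (·) x` as `f`, and `x ↦ ⋁_p a (·) (m p) * a (m p) x` as `g`. These agree on the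
image of `m`, and evaluating `1 ≤ [f x', g x']` at `x` yields `a x x' ≤ ⋁_p a x (m p) * a (m p) x'`.
-/

open Quantale

namespace VCategory

theorem iSup_mul_le_of_trans {V X M : Type*} [Mul V] [CompleteLattice V] {a : X → X → V}
    (ha2 : ∀ x y z, a x y * a y z ≤ a x z) (m : M → X) (x x' : X) :
    ⨆ p, a x (m p) * a (m p) x' ≤ a x x' :=
  iSup_le fun _ => ha2 _ _ _

variable {V : Type*} [Monoid V] [CompleteLattice V] [IsQuantale V] {X M Y : Type*}

section ResidualHom

def residualHom (φ ψ : X → V) : V := ⨅ z, φ z ⇨ᵣ ψ z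

variable {φ ψ : X → V} {w : V}

theorem le_residualHom_iff : w ≤ residualHom φ ψ ↔ ∀ z, φ z * w ≤ ψ z := by
  simp only [residualHom, le_iInf_iff, rightMulResiduation_le_iff_mul_le]

theorem one_le_residualHom_self (φ : X → V) : 1 ≤ residualHom φ φ :=
  le_residualHom_iff.2 fun z => (mul_one (φ z)).le

theorem residualHom_mul_le (φ ψ χ : X → V) :
    residualHom φ ψ * residualHom ψ χ ≤ residualHom φ χ :=
  le_residualHom_iff.2 fun z =>
    calc φ z * (residualHom φ ψ * residualHom ψ χ)
        = φ z * residualHom φ ψ * residualHom ψ χ := (mul_assoc _ _ _).symm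
      _ ≤ ψ z * residualHom ψ χ := mul_le_mul_left (le_residualHom_iff.1 le_rfl z) _
      _ ≤ χ z := le_residualHom_iff.1 le_rfl z

end ResidualHom

variable {a : X → X → V}

theorem le_residualHom_yoneda (ha2 : ∀ x y z, a x y * a y z ≤ a x z) (x x' : X) :
    a x x' ≤ residualHom (a · x) (a · x') :=
  le_residualHom_iff.2 fun z => ha2 z x x'

/-- The part of `a (·) x` that factors through the image of `m`. -/
def densityClosure (a : X → X → V) (m : M → X) (x : X) : X → V :=
  fun z => ⨆ p, a z (m p) * a (m p) x

theorem le_residualHom_densityClosure (ha2 : ∀ x y z, a x y * a y z ≤ a x z) (m : M → X)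
    (x x' : X) : a x x' ≤ residualHom (densityClosure a m x) (densityClosure a m x') := by
  refine le_residualHom_iff.2 fun z => ?_
  rw [densityClosure, iSup_mul_distrib]
  refine iSup_mono fun p => ?_
  calc a z (m p) * a (m p) x * a x x' = a z (m p) * (a (m p) x * a x x') := mul_assoc _ _ _
    _ ≤ a z (m p) * a (m p) x' := mul_le_mul_right (ha2 _ _ _) _

theorem densityClosure_apply_self (ha1 : ∀ x, 1 ≤ a x x) (ha2 : ∀ x y z, a x y * a y z ≤ a x z)
    (m : M → X) (q : M) : densityClosure a m (m q) = (a · (m q)) := by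
  funext z
  refine le_antisymm (iSup_mul_le_of_trans ha2 m z (m q)) ?_
  calc a z (m q) = a z (m q) * 1 := (mul_one _).symm
    _ ≤ a z (m q) * a (m q) (m q) := mul_le_mul_right (ha1 _) _
    _ ≤ densityClosure a m (m q) z := le_iSup (fun p => a z (m p) * a (m p) (m q)) q

theorem one_le_of_comp_eq {b : Y → Y → V} (hb2 : ∀ x y z, b x y * b y z ≤ b x z)
    {f g : X → Y} (hf : ∀ x x', a x x' ≤ b (f x) (f x')) (hg : ∀ x x', a x x' ≤ b (g x) (g x'))
    {m : M → X} (hfg : ∀ p, f (m p) = g (m p)) {x : X} (hx : 1 ≤ ⨆ p, a x (m p) * a (m p) x) :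
    1 ≤ b (f x) (g x) :=
  hx.trans <| iSup_le fun p =>
    calc a x (m p) * a (m p) x ≤ b (f x) (g (m p)) * b (g (m p)) (g x) :=
          mul_le_mul' (hfg p ▸ hf x (m p)) (hg (m p) x)
      _ ≤ b (f x) (g x) := hb2 _ _ _

end VCategory

open VCategory in
theorem stmt9_general {V : Type w} [CommMonoid V] [CompleteLattice V] [IsQuantale V]
    {M : Type u'} {X : Type u}
    (a : X → X → V) (ha1 : ∀ x, (1 : V) ≤ a x x)
    (ha2 : ∀ x y z, a x y * a y z ≤ a x z)
    (m : M → X) :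
    (∀ x x', a x x' = ⨆ p : M, a x (m p) * a (m p) x') ↔
      (∀ (Y : Type (max u w)) (b : Y → Y → V),
        (∀ y, (1 : V) ≤ b y y) → (∀ x y z, b x y * b y z ≤ b x z) →
        ∀ f g : X → Y,
          (∀ x x', a x x' ≤ b (f x) (f x')) →
          (∀ x x', a x x' ≤ b (g x) (g x')) →
          f ∘ m = g ∘ m →
          (∀ x, (1 : V) ≤ b (f x) (g x)) ∧ (∀ x, (1 : V) ≤ b (g x) (f x))) := by
  constructor
  · intro hdense Y b _ hb2 f g hf hg hfg
    have hone : ∀ x, 1 ≤ ⨆ p, a x (m p) * a (m p) x := fun x => (ha1 x).trans (hdense x x).le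
    exact ⟨fun x => one_le_of_comp_eq hb2 hf hg (congrFun hfg) (hone x),
      fun x => one_le_of_comp_eq hb2 hg hf (fun p => (congrFun hfg p).symm) (hone x)⟩
  · intro hcong x x'
    refine le_antisymm ?_ (iSup_mul_le_of_trans ha2 m x x')
    have hyoneda_le := (hcong (X → V) residualHom one_le_residualHom_self residualHom_mul_le
      (fun x z => a z x) (densityClosure a m) (le_residualHom_yoneda ha2)
      (le_residualHom_densityClosure ha2 m)
      (funext fun q => (densityClosure_apply_self ha1 ha2 m q).symm)).1 x'
    simpa [densityClosure] using le_residualHom_iff.1 hyoneda_le x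

/-- a V-functor `m : (M,d) → (X,a)` is L-dense iff for all V-functors
`f, g : X → Y` with `f ∘ m = g ∘ m` one has `f ≅ g`. -/
theorem stmt9 {V : Type w} [CommMonoid V] [CompleteLattice V] [IsQuantale V]
    {M : Type u'} {X : Type u}
    (d : M → M → V) (hd1 : ∀ p, (1 : V) ≤ d p p)
    (hd2 : ∀ p q r, d p q * d q r ≤ d p r)
    (a : X → X → V) (ha1 : ∀ x, (1 : V) ≤ a x x)
    (ha2 : ∀ x y z, a x y * a y z ≤ a x z)
    (m : M → X) (hm : ∀ p q, d p q ≤ a (m p) (m q)) :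
    (∀ x x', a x x' = ⨆ p : M, a x (m p) * a (m p) x') ↔
      (∀ (Y : Type (max u w)) (b : Y → Y → V),
        (∀ y, (1 : V) ≤ b y y) → (∀ x y z, b x y * b y z ≤ b x z) →
        ∀ f g : X → Y,
          (∀ x x', a x x' ≤ b (f x) (f x')) →
          (∀ x x', a x x' ≤ b (g x) (g x')) →
          f ∘ m = g ∘ m →
          (∀ x, (1 : V) ≤ b (f x) (g x)) ∧ (∀ x, (1 : V) ≤ b (g x) (f x))) :=
  stmt9_general a ha1 ha2 m
end

section
/- Let V be a commutative unital quantale, (X,a) a V-category, M ⊆ X and x ∈ X. Then the following are equivalent: (i) for every V-category (Y,b) and all V-functors f,g : X → Y with f|_M = g|_M one has k ≤ b(f(x),g(x)) and k ≤ b(g(x),f(x)); (ii) k ≤ ⋁_{y∈M} a(x,y) ⊗ a(y,x). -/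
/-!
(ii) ⇒ (i): for `y ∈ M` we have `f y = g y`, so each term `a x y ⊗ a y x` is bounded by
`b (f x) (f y) ⊗ b (g y) (g x)`, which is at most `b (f x) (g x)`.

(i) ⇒ (ii): `V` is a `V`-category with `hom(u, v) = v ⇨ u`, and both `z ↦ a z x` and
`z ↦ ⋁_{y ∈ M} a z y ⊗ a y x` are `V`-functors into it that agree on `M`. Condition (i)
gives `k ≤ a x x ⇨ ⋁_{y ∈ M} a x y ⊗ a y x`, and `k ≤ a x x` finishes the argument.
-/

open IsQuantale Quantale

def IsVFunctor {V X Y : Type*} [LE V] (a : X → X → V) (b : Y → Y → V) (f : X → Y) :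
    Prop :=
  ∀ x x', a x x' ≤ b (f x) (f x')

section Semigroup

variable {V X : Type*} [Semigroup V] [CompleteLattice V] [IsQuantale V]

theorem leftMulResiduation_mul_le (u v : V) : (u ⇨ₗ v) * u ≤ v :=
  leftMulResiduation_le_iff_mul_le.mp le_rfl

theorem leftMulResiduation_mul_leftMulResiduation_le (u v w : V) :
    (v ⇨ₗ u) * (w ⇨ₗ v) ≤ w ⇨ₗ u := by
  rw [leftMulResiduation_le_iff_mul_le, mul_assoc]
  calc (v ⇨ₗ u) * ((w ⇨ₗ v) * w)
      ≤ (v ⇨ₗ u) * v := mul_le_mul_right (leftMulResiduation_mul_le w v) _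
    _ ≤ u := leftMulResiduation_mul_le v u

theorem isVFunctor_leftMulResiduation_iff {Y : Type*} (a : X → X → V) (e : Y → V)
    (f : X → Y) :
    IsVFunctor a (fun y y' => e y' ⇨ₗ e y) f ↔ ∀ x x', a x x' * e (f x') ≤ e (f x) :=
  forall₂_congr fun _ _ => leftMulResiduation_le_iff_mul_le

theorem mul_biSup_mul_le {a : X → X → V} (ha : ∀ x y z, a x y * a y z ≤ a x z) (M : Set X)
    (x z z' : X) : a z z' * ⨆ y ∈ M, a z' y * a y x ≤ ⨆ y ∈ M, a z y * a y x := by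
  refine rightMulResiduation_le_iff_mul_le.mp (iSup₂_le fun y hy => ?_)
  rw [rightMulResiduation_le_iff_mul_le, ← mul_assoc]
  exact (mul_le_mul_left (ha z z' y) _).trans (le_iSup₂ (f := fun y _ => a z y * a y x) y hy)

end Semigroup

section Monoid

variable {V X : Type*} [Monoid V] [CompleteLattice V] [IsQuantale V]

theorem one_le_leftMulResiduation_self (u : V) : 1 ≤ u ⇨ₗ u :=
  leftMulResiduation_le_iff_mul_le.mpr (one_mul u).le

theorem le_of_one_le_leftMulResiduation {u v : V} (h : 1 ≤ u ⇨ₗ v) : u ≤ v := by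
  simpa only [one_mul] using leftMulResiduation_le_iff_mul_le.mp h

theorem biSup_mul_eq_of_mem {a : X → X → V} (ha₁ : ∀ x, 1 ≤ a x x)
    (ha₂ : ∀ x y z, a x y * a y z ≤ a x z) {M : Set X} {m : X} (hm : m ∈ M) (x : X) :
    ⨆ y ∈ M, a m y * a y x = a m x := by
  refine le_antisymm (iSup₂_le fun y _ => ha₂ m y x) ?_
  calc a m x = 1 * a m x := (one_mul _).symm
    _ ≤ a m m * a m x := mul_le_mul_left (ha₁ m) _
    _ ≤ ⨆ y ∈ M, a m y * a y x := le_iSup₂ (f := fun y _ => a m y * a y x) m hm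

theorem one_le_of_eqOn {Y : Type*} {a : X → X → V} {b : Y → Y → V}
    (hb : ∀ x y z, b x y * b y z ≤ b x z) {f g : X → Y} (hf : IsVFunctor a b f)
    (hg : IsVFunctor a b g) {M : Set X} (hfg : M.EqOn f g) {x : X}
    (hx : 1 ≤ ⨆ y ∈ M, a x y * a y x) : 1 ≤ b (f x) (g x) := by
  refine hx.trans (iSup₂_le fun y hy => ?_)
  calc a x y * a y x ≤ b (f x) (f y) * b (g y) (g x) := mul_le_mul' (hf x y) (hg y x)
    _ = b (f x) (g y) * b (g y) (g x) := by rw [hfg hy]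
    _ ≤ b (f x) (g x) := hb _ _ _

end Monoid

/-- for a V-category `(X,a)`, `M ⊆ X` and `x ∈ X`, `x` lies in the
L-closure of `M` (condition (i), via pairs of V-functors agreeing on `M`) iff
`k ≤ ⋁_{y ∈ M} a x y ⊗ a y x`. -/
theorem stmt10 {V : Type w} [CommMonoid V] [CompleteLattice V] [IsQuantale V]
    {X : Type u}
    (a : X → X → V) (ha1 : ∀ x, (1 : V) ≤ a x x)
    (ha2 : ∀ x y z, a x y * a y z ≤ a x z)
    (M : Set X) (x : X) :
    (∀ (Y : Type (max u w)) (b : Y → Y → V),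
      (∀ y, (1 : V) ≤ b y y) → (∀ x y z, b x y * b y z ≤ b x z) →
      ∀ f g : X → Y,
        (∀ x x', a x x' ≤ b (f x) (f x')) →
        (∀ x x', a x x' ≤ b (g x) (g x')) →
        (∀ m ∈ M, f m = g m) →
        (1 : V) ≤ b (f x) (g x) ∧ (1 : V) ≤ b (g x) (f x)) ↔
      (1 : V) ≤ ⨆ y ∈ M, a x y * a y x := by
  refine ⟨fun H => ?_, fun hx Y b _ hb f g hf hg hfg => ⟨one_le_of_eqOn hb hf hg hfg hx,
    one_le_of_eqOn hb hg hf (fun m hm => (hfg m hm).symm) hx⟩⟩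
  have hF := (isVFunctor_leftMulResiduation_iff a ULift.down
    fun z => ULift.up.{u} (⨆ y ∈ M, a z y * a y x)).mpr (mul_biSup_mul_le ha2 M x)
  have hG := (isVFunctor_leftMulResiduation_iff a ULift.down
    fun z => ULift.up.{u} (a z x)).mpr fun z z' => ha2 z z' x
  have hFG := (H (ULift.{u} V) (fun y y' => y'.down ⇨ₗ y.down)
    (fun y => one_le_leftMulResiduation_self y.down)
    (fun y₁ y₂ y₃ => leftMulResiduation_mul_leftMulResiduation_le _ y₂.down _)
    _ _ hF hG fun m hm => congrArg ULift.up (biSup_mul_eq_of_mem ha1 ha2 hm x)).1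
  exact (ha1 x).trans (le_of_one_le_leftMulResiduation hFG)
end

section
/- Let V be a commutative unital quantale, (X,a) an L-separated V-category (for all x,y ∈ X, k ≤ a(x,y) and k ≤ a(y,x) imply x = y), and M ⊆ X a subset such that (M, a|_{M×M}) is an L-complete V-category. Then M is L-closed in X, i.e. cl(M) = M where cl(M) = {x ∈ X | k ≤ ⋁_{y∈M} a(x,y) ⊗ a(y,x)}. -/
/-- an L-complete subset `M` of an L-separated V-category `(X,a)` is
L-closed in `X`. -/
theorem stmt16 {V : Type*} [CommMonoid V] [CompleteLattice V] [IsQuantale V]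
    {X : Type*}
    (a : X → X → V) (ha1 : ∀ x, (1 : V) ≤ a x x)
    (ha2 : ∀ x y z, a x y * a y z ≤ a x z)
    -- X is L-separated:
    (hsep : ∀ x y : X, (1 : V) ≤ a x y → (1 : V) ≤ a y x → x = y)
    (M : Set X)
    -- (M, a restricted) is L-complete:
    (hM : ∀ ψ : M → V, (∀ x y : M, a x.1 y.1 * ψ y ≤ ψ x) →
      (∃ φ : M → V, (∀ x y : M, φ y * a y.1 x.1 ≤ φ x) ∧
        (∀ x y : M, ψ x * φ y ≤ a x.1 y.1) ∧ (1 : V) ≤ ⨆ x : M, φ x * ψ x) →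
      ∃ x₀ : M, ∀ x : M, ψ x = a x.1 x₀.1) :
    -- then M is L-closed:
    {x : X | (1 : V) ≤ ⨆ y ∈ M, a x y * a y x} = M := by
  ext x
  simp only [Set.mem_setOf_eq]
  constructor
  · intro hx
    have hsup : (1 : V) ≤ ⨆ y : M, a x y.1 * a y.1 x := by
      rwa [← iSup_subtype''] at hx
    obtain ⟨x₀, hx₀⟩ := hM (fun y => a y.1 x)
      (fun y z => ha2 y.1 z.1 x)
      ⟨fun y => a x y.1,
        fun y z => ha2 x z.1 y.1,
        fun y z => ha2 y.1 x z.1,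
        hsup⟩
    have h1 : (1 : V) ≤ a x₀.1 x := by
      rw [hx₀ x₀]; exact ha1 x₀.1
    have h2 : (1 : V) ≤ a x x₀.1 := by
      refine hx.trans (iSup₂_le fun y hy => ?_)
      have := hx₀ ⟨y, hy⟩
      calc a x y * a y x = a x y * a y x₀.1 := by rw [this]
        _ ≤ a x x₀.1 := ha2 x y x₀.1
    have : x = x₀.1 := hsep x x₀.1 h2 h1
    rw [this]; exact x₀.2
  · intro hx
    refine le_trans ?_ (le_iSup₂ (f := fun y _ => a x y * a y x) x hx)
    refine le_trans ?_ (mul_le_mul' (ha1 x) (ha1 x))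
    simp
end

section
/- Let V be a commutative unital quantale and (X,a) a V-category. For a contravariant V-functor ψ : X → V (an element of X̂), ψ lies in the L-closure of the Yoneda image y(X) inside the V-category X̂ — i.e. k ≤ ⋁_{y∈X} â(ψ, y(y)) ⊗ â(y(y), ψ) — if and only if ψ is a right adjoint V-module ψ : X ⇸ E. Consequently, the L-closure of y(X) in X̂ is exactly the set X̃ of tight elements of X̂. -/
theorem le_qhom {V : Type*} [CommMonoid V] [CompleteLattice V] [IsQuantale V]
    {z u v : V} (h : z * u ≤ v) : z ≤ qhom u v := le_sSup h

theorem qhom_mul_le {V : Type*} [CommMonoid V] [CompleteLattice V] [IsQuantale V]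
    (u v : V) : qhom u v * u ≤ v := by
  rw [qhom, sSup_mul_distrib]
  exact iSup_le fun z => iSup_le fun hz => hz

/-- for a contravariant V-functor `ψ : X → V` on a V-category `(X,a)`,
`ψ` lies in the L-closure of the Yoneda image in `X̂`, i.e.
`k ≤ ⋁_y â(ψ, y(y)) ⊗ â(y(y), ψ)`, iff `ψ` is a right adjoint V-module `X ⇸ E`,
i.e. the L-closure of `y(X)` in `X̂` consists exactly of the tight presheaves. -/
theorem stmt17 {V : Type*} [CommMonoid V] [CompleteLattice V] [IsQuantale V]
    {X : Type*}
    (a : X → X → V) (ha1 : ∀ x, (1 : V) ≤ a x x)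
    (ha2 : ∀ x y z, a x y * a y z ≤ a x z)
    (ψ : X → V) (hψ : ∀ x y, a x y * ψ y ≤ ψ x) :
    ((1 : V) ≤ ⨆ y : X,
        (⨅ x : X, qhom (ψ x) (a x y)) * ⨅ x : X, qhom (a x y) (ψ x)) ↔
      (∃ φ : X → V, (∀ x y, φ y * a y x ≤ φ x) ∧ (∀ x y, ψ x * φ y ≤ a x y) ∧
        (1 : V) ≤ ⨆ x : X, φ x * ψ x) := by
  constructor
  · intro h
    refine ⟨fun y => ⨅ x, qhom (ψ x) (a x y), ?_, ?_, ?_⟩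
    · intro x y
      refine le_iInf fun z => le_qhom ?_
      calc (⨅ x', qhom (ψ x') (a x' y)) * a y x * ψ z
          = (⨅ x', qhom (ψ x') (a x' y)) * ψ z * a y x := by
            rw [mul_right_comm]
        _ ≤ qhom (ψ z) (a z y) * ψ z * a y x := by
            gcongr; exact iInf_le _ z
        _ ≤ a z y * a y x := by gcongr; exact qhom_mul_le _ _
        _ ≤ a z x := ha2 z y x
    · intro x y
      calc ψ x * ⨅ x', qhom (ψ x') (a x' y)
          ≤ ψ x * qhom (ψ x) (a x y) := by gcongr; exact iInf_le _ x
        _ = qhom (ψ x) (a x y) * ψ x := mul_comm _ _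
        _ ≤ a x y := qhom_mul_le _ _
    · refine h.trans (iSup_mono fun y => ?_)
      gcongr
      calc (⨅ x, qhom (a x y) (ψ x)) ≤ qhom (a y y) (ψ y) := iInf_le _ y
        _ = qhom (a y y) (ψ y) * 1 := (mul_one _).symm
        _ ≤ qhom (a y y) (ψ y) * a y y := by gcongr; exact ha1 y
        _ ≤ ψ y := qhom_mul_le _ _
  · rintro ⟨φ, hφ1, hφ2, hφ3⟩
    refine hφ3.trans (iSup_mono fun y => ?_)
    gcongr
    · exact le_iInf fun x => le_qhom ((mul_comm _ _).le.trans (hφ2 x y))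
    · exact le_iInf fun x => le_qhom ((mul_comm _ _).le.trans (hψ x y))
end
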